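/- arXiv:2209.00781 — 8 statements merged into one kernel-verified Lean document; each statement's English description precedes it below -/
import Mathlib

section
/- Let J ≥ 1 and m be integers with 1 ≤ m ≤ J, let Γ ≥ 1 be a real number, and let u : Fin J → ℝ satisfy 0 ≤ u_j ≤ 1 for all j. For each subset S of Fin J with |S| = m define the weight w(S) = ∏_{j ∈ S} Γ^{u_j}, and set P(u) = (Σ_{S : |S| = m, 0 ∈ S} w(S)) / (Σ_{S : |S| = m} w(S)). Then m/(m + (J − m)·Γ) ≤ P(u) ≤ Γ·m/(Γ·m + (J − m)). -/
open Finset in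
/-- Sharp bounds on the probability that the case (unit `0`) is treated in
Rosenbaum's sensitivity model for a matched set of `J` units with `m` treated. -/
theorem rosenbaum_bounds
    (J m : ℕ) (hJ : 0 < J) (hm1 : 1 ≤ m) (hmJ : m ≤ J)
    (Γ : ℝ) (hΓ : 1 ≤ Γ)
    (u : Fin J → ℝ) (hu : ∀ j, 0 ≤ u j ∧ u j ≤ 1)
    (w : Finset (Fin J) → ℝ) (hw : ∀ S, w S = ∏ j ∈ S, Γ ^ (u j))
    (P : ℝ)
    (hP : P = (∑ S ∈ (Finset.powersetCard m (Finset.univ : Finset (Fin J))).filter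
                  (fun S => (⟨0, hJ⟩ : Fin J) ∈ S), w S) /
              (∑ S ∈ Finset.powersetCard m (Finset.univ : Finset (Fin J)), w S)) :
    (m : ℝ) / (m + (J - m) * Γ) ≤ P ∧ P ≤ Γ * m / (Γ * m + (J - m)) := by
  classical
  set i0 : Fin J := ⟨0, hJ⟩ with hi0
  have hΓ0 : (0:ℝ) < Γ := lt_of_lt_of_le one_pos hΓ
  have hwpos : ∀ S, 0 < w S := fun S => by
    rw [hw]; exact Finset.prod_pos fun j _ => Real.rpow_pos_of_pos hΓ0 _
  set PS := Finset.powersetCard m (Finset.univ : Finset (Fin J)) with hPS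
  set A := ∑ S ∈ PS.filter (fun S => i0 ∈ S), w S with hA
  set B := ∑ S ∈ PS.filter (fun S => ¬ i0 ∈ S), w S with hB
  have hAB : A + B = ∑ S ∈ PS, w S := Finset.sum_filter_add_sum_filter_not _ _ _
  -- A is positive
  have hAne : (PS.filter (fun S => i0 ∈ S)).Nonempty := by
    obtain ⟨T, hsub, hcard⟩ := Finset.exists_superset_card_eq
      (s := ({i0} : Finset (Fin J))) (n := m)
      (by simpa using hm1) (by simpa using hmJ)
    exact ⟨T, by
      simp only [Finset.mem_filter, Finset.mem_powersetCard, hPS]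
      exact ⟨⟨Finset.subset_univ _, hcard⟩, hsub (Finset.mem_singleton_self i0)⟩⟩
  have hApos : 0 < A :=
    Finset.sum_pos (fun S _ => hwpos S) hAne
  have hBnn : 0 ≤ B := Finset.sum_nonneg fun S _ => (hwpos S).le
  -- sigma sets
  set SA := (PS.filter (fun S => i0 ∈ S)).sigma (fun S => Finset.univ \ S) with hSA
  set SB := (PS.filter (fun S => ¬ i0 ∈ S)).sigma (fun T => T) with hSB
  have main1 : ((J : ℝ) - m) * A = ∑ p ∈ SA, w p.1 := by
    rw [hSA, Finset.sum_sigma, hA, Finset.mul_sum]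
    refine Finset.sum_congr rfl fun S hS => ?_
    have hcard : S.card = m := by
      simp only [Finset.mem_filter, Finset.mem_powersetCard, hPS] at hS
      exact hS.1.2
    have hconst : ∀ s ∈ Finset.univ \ S,
        w (⟨S, s⟩ : Σ _ : Finset (Fin J), Fin J).fst = w S := fun _ _ => rfl
    rw [Finset.sum_congr rfl hconst, Finset.sum_const, nsmul_eq_mul,
      Finset.card_sdiff_of_subset (Finset.subset_univ _)]
    simp [hcard, Nat.cast_sub hmJ, Finset.card_univ]
  have main2 : (m : ℝ) * B = ∑ q ∈ SB, w q.1 := by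
    rw [hSB, Finset.sum_sigma, hB, Finset.mul_sum]
    refine Finset.sum_congr rfl fun T hT => ?_
    have hcard : T.card = m := by
      simp only [Finset.mem_filter, Finset.mem_powersetCard, hPS] at hT
      exact hT.1.2
    have hconst : ∀ s ∈ T,
        w (⟨T, s⟩ : Σ _ : Finset (Fin J), Fin J).fst = w T := fun _ _ => rfl
    rw [Finset.sum_congr rfl hconst, Finset.sum_const, nsmul_eq_mul, hcard]
  -- membership characterizations
  have memSA : ∀ p : Σ _ : Finset (Fin J), Fin J,
      p ∈ SA ↔ (p.1.card = m ∧ i0 ∈ p.1) ∧ p.2 ∉ p.1 := by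
    intro p
    simp [hSA, hPS, Finset.mem_sigma, Finset.mem_filter, Finset.mem_powersetCard,
      Finset.mem_sdiff, and_assoc]
  have memSB : ∀ p : Σ _ : Finset (Fin J), Fin J,
      p ∈ SB ↔ (p.1.card = m ∧ i0 ∉ p.1) ∧ p.2 ∈ p.1 := by
    intro p
    simp [hSB, hPS, Finset.mem_sigma, Finset.mem_filter, Finset.mem_powersetCard,
      and_assoc]
  -- bijection between SA and SB
  have bij : ∑ p ∈ SA, w (insert p.2 (p.1.erase i0)) = ∑ q ∈ SB, w q.1 := by
    refine Finset.sum_nbij'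
      (i := fun p => ⟨insert p.2 (p.1.erase i0), p.2⟩)
      (j := fun q => ⟨insert i0 (q.1.erase q.2), q.2⟩) ?_ ?_ ?_ ?_ ?_
    · rintro ⟨S, j⟩ hp
      obtain ⟨⟨hcard, hi0S⟩, hjS⟩ := (memSA _).1 hp
      refine (memSB _).2 ⟨⟨?_, ?_⟩, Finset.mem_insert_self _ _⟩
      · rw [Finset.card_insert_of_notMem (fun h => hjS (Finset.erase_subset _ _ h)),
          Finset.card_erase_of_mem hi0S, hcard]
        omega
      · intro h
        rcases Finset.mem_insert.1 h with h | h
        · exact hjS (h ▸ hi0S)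
        · exact Finset.notMem_erase _ _ h
    · rintro ⟨T, j⟩ hq
      obtain ⟨⟨hcard, hi0T⟩, hjT⟩ := (memSB _).1 hq
      refine (memSA _).2 ⟨⟨?_, Finset.mem_insert_self _ _⟩, ?_⟩
      · rw [Finset.card_insert_of_notMem (fun h => hi0T (Finset.erase_subset _ _ h)),
          Finset.card_erase_of_mem hjT, hcard]
        omega
      · intro h
        rcases Finset.mem_insert.1 h with h | h
        · exact hi0T (h ▸ hjT)
        · exact Finset.notMem_erase _ _ h
    · rintro ⟨S, j⟩ hp
      obtain ⟨⟨hcard, hi0S⟩, hjS⟩ := (memSA _).1 hp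
      simp only [Sigma.mk.inj_iff, heq_eq_eq, and_true]
      rw [Finset.erase_insert (fun h => hjS (Finset.erase_subset _ _ h)),
        Finset.insert_erase hi0S]
    · rintro ⟨T, j⟩ hq
      obtain ⟨⟨hcard, hi0T⟩, hjT⟩ := (memSB _).1 hq
      simp only [Sigma.mk.inj_iff, heq_eq_eq, and_true]
      rw [Finset.erase_insert (fun h => hi0T (Finset.erase_subset _ _ h)),
        Finset.insert_erase hjT]
    · rintro ⟨S, j⟩ _; rfl
  -- termwise factorization
  have hfact : ∀ p ∈ SA,
      w p.1 = Γ ^ (u i0) * w (p.1.erase i0) ∧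
      w (insert p.2 (p.1.erase i0)) = Γ ^ (u p.2) * w (p.1.erase i0) := by
    rintro ⟨S, j⟩ hp
    obtain ⟨⟨hcard, hi0S⟩, hjS⟩ := (memSA _).1 hp
    constructor
    · rw [hw, hw]
      conv_lhs => rw [← Finset.insert_erase hi0S]
      rw [Finset.prod_insert (Finset.notMem_erase _ _)]
    · rw [hw, hw, Finset.prod_insert (fun h => hjS (Finset.erase_subset _ _ h))]
  have hrpow1 : ∀ j : Fin J, 1 ≤ Γ ^ (u j) := fun j =>
    Real.one_le_rpow hΓ (hu j).1
  have hrpowΓ : ∀ j : Fin J, Γ ^ (u j) ≤ Γ := fun j => by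
    calc Γ ^ (u j) ≤ Γ ^ (1:ℝ) := Real.rpow_le_rpow_of_exponent_le hΓ (hu j).2
    _ = Γ := Real.rpow_one Γ
  -- two key inequalities
  have ineq1 : (m : ℝ) * B ≤ Γ * (((J : ℝ) - m) * A) := by
    rw [main2, ← bij, main1, Finset.mul_sum]
    refine Finset.sum_le_sum fun p hp => ?_
    obtain ⟨h1, h2⟩ := hfact p hp
    have hc : 0 < w (p.1.erase i0) := hwpos _
    rw [h1, h2]
    calc Γ ^ (u p.2) * w (p.1.erase i0) ≤ Γ * w (p.1.erase i0) := by
          exact mul_le_mul_of_nonneg_right (hrpowΓ _) hc.le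
      _ ≤ Γ * (Γ ^ (u i0) * w (p.1.erase i0)) :=
          mul_le_mul_of_nonneg_left (le_mul_of_one_le_left hc.le (hrpow1 i0)) hΓ0.le
  have ineq2 : ((J : ℝ) - m) * A ≤ Γ * ((m : ℝ) * B) := by
    rw [main2, ← bij, main1, Finset.mul_sum]
    refine Finset.sum_le_sum fun p hp => ?_
    obtain ⟨h1, h2⟩ := hfact p hp
    have hc : 0 < w (p.1.erase i0) := hwpos _
    rw [h1, h2]
    calc Γ ^ (u i0) * w (p.1.erase i0) ≤ Γ * w (p.1.erase i0) := by
          exact mul_le_mul_of_nonneg_right (hrpowΓ _) hc.le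
      _ ≤ Γ * (Γ ^ (u p.2) * w (p.1.erase i0)) :=
          mul_le_mul_of_nonneg_left (le_mul_of_one_le_left hc.le (hrpow1 p.2)) hΓ0.le
  -- final arithmetic
  have hm1' : (1 : ℝ) ≤ m := by exact_mod_cast hm1
  have hJm : (0 : ℝ) ≤ (J : ℝ) - m := by
    have : (m : ℝ) ≤ J := by exact_mod_cast hmJ
    linarith
  have hD : 0 < A + B := by linarith
  have hPval : P = A / (A + B) := by rw [hP, hAB, hA]
  have hden1 : (0 : ℝ) < (m : ℝ) + ((J : ℝ) - m) * Γ := by nlinarith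
  have hden2 : (0 : ℝ) < Γ * m + ((J : ℝ) - m) := by nlinarith
  constructor
  · rw [hPval, div_le_div_iff₀ hden1 hD]
    nlinarith [ineq1]
  · rw [hPval, div_le_div_iff₀ hD hden2]
    nlinarith [ineq2]
end

section
/- Let J ≥ 1 and m be integers with 1 ≤ m ≤ J and let Γ ≥ 1 be a real number. For u : Fin J → [0,1] define w(S) = ∏_{j ∈ S} Γ^{u_j} for each m-element subset S of Fin J and P(u) = (Σ_{S : |S| = m, 0 ∈ S} w(S)) / (Σ_{S : |S| = m} w(S)). Then the bounds of the sensitivity analysis are sharp: if u_0 = 1 and u_j = 0 for all j ≠ 0, then P(u) = Γ·m/(Γ·m + (J − m)); and if u_0 = 0 and u_j = 1 for all j ≠ 0, then P(u) = m/(m + (J − m)·Γ). -/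
open Finset

lemma ros_filter_not_card (J m : ℕ) (a : Fin J) :
    ((powersetCard m (univ : Finset (Fin J))).filter (fun S => a ∉ S)).card
      = (J-1).choose m := by
  have h : (powersetCard m (univ : Finset (Fin J))).filter (fun S => a ∉ S)
      = powersetCard m (univ.erase a) := by
    ext S
    simp [Finset.mem_powersetCard, Finset.subset_erase, and_comm, and_assoc]
  rw [h, Finset.card_powersetCard, Finset.card_erase_of_mem (Finset.mem_univ a),
    Finset.card_univ, Fintype.card_fin]

lemma ros_filter_mem_card (J m : ℕ) (hJ : 0 < J) (hm1 : 1 ≤ m) (hmJ : m ≤ J) (a : Fin J) :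
    ((powersetCard m (univ : Finset (Fin J))).filter (fun S => a ∈ S)).card
      = (J-1).choose (m-1) := by
  have h1 := Finset.card_filter_add_card_filter_not
    (s := powersetCard m (univ : Finset (Fin J))) (p := fun S => a ∈ S)
  rw [ros_filter_not_card J m a, Finset.card_powersetCard, Finset.card_univ,
    Fintype.card_fin] at h1
  have hJ' : J = (J-1)+1 := by omega
  have hm' : m = (m-1)+1 := by omega
  have h2 : J.choose m = (J-1).choose (m-1) + (J-1).choose m := by
    rw [hJ', hm']; simp [Nat.choose_succ_succ]
  omega

open Finset in
/-- Sharpness of the bounds of Rosenbaum's sensitivity analysis: the upper bound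
is attained at `u = (1,0,…,0)` and the lower bound at `u = (0,1,…,1)`. -/
theorem rosenbaum_bounds_sharp
    (J m : ℕ) (hJ : 0 < J) (hm1 : 1 ≤ m) (hmJ : m ≤ J)
    (Γ : ℝ) (hΓ : 1 ≤ Γ)
    (w : (Fin J → ℝ) → Finset (Fin J) → ℝ)
    (hw : ∀ u S, w u S = ∏ j ∈ S, Γ ^ (u j))
    (P : (Fin J → ℝ) → ℝ)
    (hP : ∀ u, P u = (∑ S ∈ (Finset.powersetCard m (Finset.univ : Finset (Fin J))).filter
                  (fun S => (⟨0, hJ⟩ : Fin J) ∈ S), w u S) /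
              (∑ S ∈ Finset.powersetCard m (Finset.univ : Finset (Fin J)), w u S)) :
    (∀ u : Fin J → ℝ, (∀ j, 0 ≤ u j ∧ u j ≤ 1) →
        u ⟨0, hJ⟩ = 1 → (∀ j, j ≠ ⟨0, hJ⟩ → u j = 0) →
        P u = Γ * m / (Γ * m + (J - m))) ∧
    (∀ u : Fin J → ℝ, (∀ j, 0 ≤ u j ∧ u j ≤ 1) →
        u ⟨0, hJ⟩ = 0 → (∀ j, j ≠ ⟨0, hJ⟩ → u j = 1) →
        P u = m / (m + (J - m) * Γ)) := by
  set a : Fin J := ⟨0, hJ⟩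
  have hΓ0 : (0:ℝ) < Γ := lt_of_lt_of_le one_pos hΓ
  set C1 : ℕ := (J-1).choose (m-1) with hC1
  set C2 : ℕ := (J-1).choose m with hC2
  have hC1pos : 0 < C1 := Nat.choose_pos (by omega)
  -- key combinatorial identity
  have key : (m:ℝ) * C2 = ((J:ℝ) - m) * C1 := by
    have h := Nat.choose_succ_right_eq (J-1) (m-1)
    have hm' : (m-1)+1 = m := by omega
    have hJm : (J-1)-(m-1) = J - m := by omega
    rw [hm', hJm] at h
    have : (C2 * m : ℝ) = (C1 * (J - m : ℕ) : ℝ) := by exact_mod_cast congrArg (Nat.cast : ℕ → ℝ) h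
    rw [Nat.cast_sub hmJ] at this
    linarith
  have hcard_mem := ros_filter_mem_card J m hJ hm1 hmJ a
  have hcard_not := ros_filter_not_card J m a
  have hsplit : ∀ u : Fin J → ℝ,
      (∑ S ∈ Finset.powersetCard m (Finset.univ : Finset (Fin J)), w u S)
      = (∑ S ∈ (Finset.powersetCard m (Finset.univ : Finset (Fin J))).filter (fun S => a ∈ S), w u S)
      + (∑ S ∈ (Finset.powersetCard m (Finset.univ : Finset (Fin J))).filter (fun S => a ∉ S), w u S) := by
    intro u
    exact (Finset.sum_filter_add_sum_filter_not _ _ _).symm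
  constructor
  · intro u _ hu0 huj
    -- w u S = Γ if a ∈ S, else 1
    have hmem : ∀ S ∈ (Finset.powersetCard m (Finset.univ : Finset (Fin J))).filter (fun S => a ∈ S),
        w u S = Γ := by
      intro S hS
      obtain ⟨-, haS⟩ := Finset.mem_filter.mp hS
      rw [hw, ← Finset.mul_prod_erase S _ haS, hu0, Real.rpow_one]
      rw [Finset.prod_eq_one, mul_one]
      intro j hj
      rw [huj j (Finset.ne_of_mem_erase hj), Real.rpow_zero]
    have hnot : ∀ S ∈ (Finset.powersetCard m (Finset.univ : Finset (Fin J))).filter (fun S => a ∉ S),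
        w u S = 1 := by
      intro S hS
      obtain ⟨-, haS⟩ := Finset.mem_filter.mp hS
      rw [hw, Finset.prod_eq_one]
      intro j hj
      rw [huj j (fun h => haS (h ▸ hj)), Real.rpow_zero]
    have hnum : (∑ S ∈ (Finset.powersetCard m (Finset.univ : Finset (Fin J))).filter (fun S => a ∈ S), w u S) = C1 * Γ := by
      rw [Finset.sum_congr rfl hmem, Finset.sum_const, hcard_mem, nsmul_eq_mul]
    have hden2 : (∑ S ∈ (Finset.powersetCard m (Finset.univ : Finset (Fin J))).filter (fun S => a ∉ S), w u S) = C2 := by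
      rw [Finset.sum_congr rfl hnot, Finset.sum_const, hcard_not, nsmul_eq_mul, mul_one]
    rw [hP, hsplit, hnum, hden2]
    have hd1 : (0:ℝ) < C1 * Γ + C2 := by positivity
    have hd2 : (0:ℝ) < Γ * m + ((J:ℝ) - m) := by
      have : (0:ℝ) ≤ (J:ℝ) - m := by
        have := Nat.cast_le (α := ℝ).mpr hmJ; linarith
      nlinarith [Nat.one_le_cast (α := ℝ).mpr hm1]
    rw [div_eq_div_iff (by linarith) (by linarith)]
    linear_combination (-Γ) * key
  · intro u _ hu0 huj
    have hmem : ∀ S ∈ (Finset.powersetCard m (Finset.univ : Finset (Fin J))).filter (fun S => a ∈ S),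
        w u S = Γ ^ (m-1) := by
      intro S hS
      obtain ⟨hS', haS⟩ := Finset.mem_filter.mp hS
      obtain ⟨-, hScard⟩ := Finset.mem_powersetCard.mp hS'
      rw [hw, ← Finset.mul_prod_erase S _ haS, hu0, Real.rpow_zero, one_mul]
      have : ∀ j ∈ S.erase a, Γ ^ (u j) = Γ := by
        intro j hj
        rw [huj j (Finset.ne_of_mem_erase hj), Real.rpow_one]
      rw [Finset.prod_congr rfl this, Finset.prod_const, Finset.card_erase_of_mem haS, hScard]
    have hnot : ∀ S ∈ (Finset.powersetCard m (Finset.univ : Finset (Fin J))).filter (fun S => a ∉ S),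
        w u S = Γ ^ m := by
      intro S hS
      obtain ⟨hS', haS⟩ := Finset.mem_filter.mp hS
      obtain ⟨-, hScard⟩ := Finset.mem_powersetCard.mp hS'
      rw [hw]
      have : ∀ j ∈ S, Γ ^ (u j) = Γ := by
        intro j hj
        rw [huj j (fun h => haS (h ▸ hj)), Real.rpow_one]
      rw [Finset.prod_congr rfl this, Finset.prod_const, hScard]
    have hnum : (∑ S ∈ (Finset.powersetCard m (Finset.univ : Finset (Fin J))).filter (fun S => a ∈ S), w u S) = C1 * Γ ^ (m-1) := by
      rw [Finset.sum_congr rfl hmem, Finset.sum_const, hcard_mem, nsmul_eq_mul]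
    have hden2 : (∑ S ∈ (Finset.powersetCard m (Finset.univ : Finset (Fin J))).filter (fun S => a ∉ S), w u S) = C2 * Γ ^ m := by
      rw [Finset.sum_congr rfl hnot, Finset.sum_const, hcard_not, nsmul_eq_mul]
    rw [hP, hsplit, hnum, hden2]
    have hpow : Γ ^ m = Γ ^ (m-1) * Γ := by
      conv_lhs => rw [show m = (m-1)+1 by omega]
      rw [pow_succ]
    have hppos : (0:ℝ) < Γ ^ (m-1) := by positivity
    rw [hpow]
    have hd1 : (0:ℝ) < C1 * Γ ^ (m-1) + C2 * (Γ ^ (m-1) * Γ) := by positivity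
    have hd2 : (0:ℝ) < (m:ℝ) + ((J:ℝ) - m) * Γ := by
      have h1 : (0:ℝ) ≤ (J:ℝ) - m := by
        have := Nat.cast_le (α := ℝ).mpr hmJ; linarith
      nlinarith [Nat.one_le_cast (α := ℝ).mpr hm1]
    rw [div_eq_div_iff (by linarith) (by linarith)]
    linear_combination (-(Γ ^ (m-1) * Γ)) * key
end

section
/- Let J ≥ 1 and m be integers with 1 ≤ m ≤ J, and let Γ ≥ 1 and Θ ≥ 1 be real numbers. Suppose p ∈ ℝ satisfies m/(m + (J − m)·Γ) ≤ p ≤ Γ·m/(Γ·m + (J − m)), and ρ ∈ ℝ satisfies 1 ≤ ρ ≤ Θ. Define q = p·ρ/(p·ρ + (1 − p)). Then m/(m + (J − m)·Γ) ≤ q ≤ Γ·Θ·m/(Γ·Θ·m + (J − m)). -/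
/-- Proposition 1 (ye2021combining): bounds on the conditional probability that
the case is treated after conditioning on the case subtype, with hidden-bias
parameter `Γ` and selection-bias parameter `Θ`. -/
theorem prop1_selection_bias_bounds
    (J m : ℕ) (hJ : 1 ≤ J) (hm1 : 1 ≤ m) (hmJ : m ≤ J)
    (Γ Θ : ℝ) (hΓ : 1 ≤ Γ) (hΘ : 1 ≤ Θ)
    (p ρ : ℝ)
    (hpl : (m : ℝ) / (m + (J - m) * Γ) ≤ p)
    (hpu : p ≤ Γ * m / (Γ * m + (J - m)))
    (hρl : 1 ≤ ρ) (hρu : ρ ≤ Θ)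
    (q : ℝ) (hq : q = p * ρ / (p * ρ + (1 - p))) :
    (m : ℝ) / (m + (J - m) * Γ) ≤ q ∧ q ≤ Γ * Θ * m / (Γ * Θ * m + (J - m)) := by
  have ha : (1 : ℝ) ≤ (m : ℝ) := by exact_mod_cast hm1
  have hb : (0 : ℝ) ≤ (J : ℝ) - m := by
    have : (m : ℝ) ≤ J := by exact_mod_cast hmJ
    linarith
  have hd1 : (0 : ℝ) < (m : ℝ) + ((J : ℝ) - m) * Γ := by nlinarith
  have hd2 : (0 : ℝ) < Γ * m + ((J : ℝ) - m) := by nlinarith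
  have hΓΘ : (1:ℝ) ≤ Γ * Θ := by nlinarith
  have hd3 : (0 : ℝ) < Γ * Θ * m + ((J : ℝ) - m) := by nlinarith
  have hpl' : (m : ℝ) ≤ p * ((m : ℝ) + ((J : ℝ) - m) * Γ) := (div_le_iff₀ hd1).mp hpl
  have hpu' : p * (Γ * m + ((J : ℝ) - m)) ≤ Γ * m := (le_div_iff₀ hd2).mp hpu
  have hp0 : 0 < p := by nlinarith
  have hp1 : p ≤ 1 := by nlinarith
  have hρ0 : (0 : ℝ) < ρ := by linarith
  have hden : 0 < p * ρ + (1 - p) := by nlinarith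
  subst hq
  constructor
  · rw [div_le_div_iff₀ hd1 hden]
    nlinarith [mul_nonneg (mul_nonneg (sub_nonneg.mpr hρl) hp0.le) (mul_nonneg hb (by linarith : (0:ℝ) ≤ Γ))]
  · rw [div_le_div_iff₀ hden hd3]
    nlinarith [mul_nonneg (mul_nonneg (sub_nonneg.mpr hρu) hp0.le) hb,
      mul_nonneg (mul_nonneg (by linarith : (0:ℝ) ≤ Θ - 1) hp0.le) hb,
      mul_pos (by linarith : (0:ℝ) < Θ) hp0]
end

section
/- Let J ≥ 1 and m be integers with 1 ≤ m ≤ J, let r ∈ {0,1}, and let Γ ≥ 1 and Θ ≥ 1 be real numbers. Suppose p ∈ ℝ satisfies m·r/(m·r + (J − m·r)·Γ) ≤ p ≤ Γ·m·r/(Γ·m·r + (J − m·r)), and ρ ∈ ℝ satisfies 1 ≤ ρ ≤ Θ. Define q = p·ρ/(p·ρ + (1 − p)). Then m·r/(m·r + (J − m·r)·Γ) ≤ q ≤ Θ·Γ·m·r/(Θ·Γ·m·r + (J − m·r)). -/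
/-- The algebraic content of Proposition 3 of the paper: bounds for the
probability that `Bᵢ = 1` within a case subtype, with hidden-bias parameter `Γ`
and selection-bias parameter `Θ`, where `r ∈ {0,1}`. -/
theorem prop3_attributable_bounds
    (J m r : ℕ) (hJ : 1 ≤ J) (hm1 : 1 ≤ m) (hmJ : m ≤ J)
    (hr : r = 0 ∨ r = 1)
    (Γ Θ : ℝ) (hΓ : 1 ≤ Γ) (hΘ : 1 ≤ Θ)
    (p ρ : ℝ)
    (hpl : (m * r : ℝ) / (m * r + (J - m * r) * Γ) ≤ p)
    (hpu : p ≤ Γ * (m * r) / (Γ * (m * r) + (J - m * r)))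
    (hρl : 1 ≤ ρ) (hρu : ρ ≤ Θ)
    (q : ℝ) (hq : q = p * ρ / (p * ρ + (1 - p))) :
    (m * r : ℝ) / (m * r + (J - m * r) * Γ) ≤ q ∧
      q ≤ Θ * Γ * (m * r) / (Θ * Γ * (m * r) + (J - m * r)) := by
  rcases hr with rfl | rfl
  · -- r = 0 : p = 0, q = 0
    simp only [Nat.cast_zero, mul_zero, zero_div, mul_zero] at hpl hpu ⊢
    have hp : p = 0 := le_antisymm (by simpa using hpu) hpl
    subst hp
    simp [hq]
  · -- r = 1
    simp only [Nat.cast_one, mul_one] at hpl hpu ⊢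
    set a : ℝ := (m : ℝ) with ha_def
    set b : ℝ := (J : ℝ) - (m : ℝ) with hb_def
    have ha : (1 : ℝ) ≤ a := by rw [ha_def]; exact_mod_cast hm1
    have hb : (0 : ℝ) ≤ b := by
      have : (m : ℝ) ≤ (J : ℝ) := by exact_mod_cast hmJ
      simp [hb_def]; linarith
    have hΓ0 : (0 : ℝ) < Γ := lt_of_lt_of_le one_pos hΓ
    have hΘ0 : (0 : ℝ) < Θ := lt_of_lt_of_le one_pos hΘ
    have hL : (0 : ℝ) < a + b * Γ := by nlinarith
    have hU : (0 : ℝ) < Γ * a + b := by nlinarith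
    have hΘΓ : (1 : ℝ) ≤ Θ * Γ := by nlinarith
    have hD : (0 : ℝ) < Θ * Γ * a + b := by nlinarith
    have hp0 : 0 < p := lt_of_lt_of_le (div_pos (by linarith) hL) hpl
    have hp1 : p ≤ 1 := by
      refine hpu.trans ?_
      rw [div_le_one hU]; nlinarith
    have hd : (0 : ℝ) < p * ρ + (1 - p) := by nlinarith
    have hpuU : p * (Γ * a + b) ≤ Γ * a := (le_div_iff₀ hU).mp hpu
    constructor
    · -- lower bound: a/(a+bΓ) ≤ p ≤ q
      refine hpl.trans ?_
      rw [hq, le_div_iff₀ hd]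
      nlinarith [mul_nonneg (mul_nonneg hp0.le (sub_nonneg.2 hp1)) (sub_nonneg.2 hρl)]
    · -- upper bound
      rw [hq, div_le_div_iff₀ hd hD]
      have key : p * b ≤ Γ * a * (1 - p) := by nlinarith
      have h1 : p * ρ * b ≤ p * Θ * b :=
        by nlinarith [mul_nonneg hp0.le hb]
      have h2 : Θ * (p * b) ≤ Θ * (Γ * a * (1 - p)) :=
        mul_le_mul_of_nonneg_left key hΘ0.le
      have key2 : p * ρ * b ≤ Θ * Γ * a * (1 - p) := by
        calc p * ρ * b ≤ p * Θ * b := h1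
          _ = Θ * (p * b) := by ring
          _ ≤ Θ * (Γ * a * (1 - p)) := h2
          _ = Θ * Γ * a * (1 - p) := by ring
      linarith [key2]
end

section
/- Let L ≥ 1 be an integer and τ ∈ (0,1] a real number. Let P_1, …, P_L be i.i.d. random variables uniformly distributed on [0,1] (i.e., consider Lebesgue measure on [0,1]^L), and define the truncated product W = ∏_{k : P_k ≤ τ} P_k (an empty product equals 1). Then for every w with 0 < w ≤ 1, ℙ(W < w) = Σ_{k=1}^{L} C(L,k)·(1 − τ)^{L−k} · ( 1{w ≤ τ^k} · w · Σ_{s=0}^{k−1} (k·ln τ − ln w)^s / s! + 1{w > τ^k} · τ^k ), where C(L,k) is the binomial coefficient. -/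
/-!
Write `F k u` for the probability that a product of `k` independent uniforms is `< u`.
Conditioning on the first factor `a` gives `F (k + 1) u = u + ∫_u^1 F k (u / a) da` for
`0 < u ≤ 1`, and `a ↦ u * ∑_{s ≤ k} (log a - log u)^s / s!` is an antiderivative of the integrand,
whence `F k u = u * ∑_{s < k} (-log u)^s / s!`.

For the truncated product, split the cube according to the set `T` of coordinates that are `≤ τ`.
The coordinates outside `T` range freely over `(τ, 1]` and contribute `(1 - τ)^(L - |T|)`; those
in `T` range over `[0, τ]^|T|`, the unit cube scaled by `τ`, and contribute
`τ^|T| * F |T| (w / τ^|T|)`.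
Grouping the sets `T` by cardinality produces the binomial coefficients, and `T = ∅` contributes
nothing because the empty product `1` is not `< w ≤ 1`.
-/

open MeasureTheory Set Real
open scoped Nat Pointwise

noncomputable def expPartialSum (k : ℕ) (t : ℝ) : ℝ :=
  ∑ s ∈ Finset.range k, t ^ s / s !

theorem expPartialSum_nonneg (k : ℕ) {t : ℝ} (ht : 0 ≤ t) : 0 ≤ expPartialSum k t :=
  Finset.sum_nonneg fun s _ => by positivity

theorem one_le_expPartialSum_succ (k : ℕ) {t : ℝ} (ht : 0 ≤ t) : 1 ≤ expPartialSum (k + 1) t := by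
  have := Finset.single_le_sum (fun s _ => by positivity : ∀ s ∈ Finset.range (k + 1),
    0 ≤ t ^ s / s !) (Finset.mem_range.2 k.succ_pos)
  simpa [expPartialSum] using this

@[simp]
theorem expPartialSum_succ_zero (k : ℕ) : expPartialSum (k + 1) 0 = 1 := by
  simp [expPartialSum, Finset.sum_range_succ']

theorem hasDerivAt_expPartialSum_succ (k : ℕ) (t : ℝ) :
    HasDerivAt (expPartialSum (k + 1)) (expPartialSum k t) t := by
  have hterm (s : ℕ) : HasDerivAt (fun t : ℝ => t ^ (s + 1) / (s + 1)!) (t ^ s / s !) t := by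
    refine ((hasDerivAt_pow (s + 1) t).div_const ((s + 1)! : ℝ)).congr_deriv ?_
    rw [Nat.factorial_succ]; push_cast; field_simp
  unfold expPartialSum
  simp_rw [Finset.sum_range_succ' _ k]
  simpa using (HasDerivAt.fun_sum fun s _ => hterm s).add_const 1

theorem lintegral_Ioc_ofReal_eq_sub_of_hasDerivAt {g g' : ℝ → ℝ} {a b : ℝ} (hab : a ≤ b)
    (hcont : ContinuousOn g (Icc a b)) (hderiv : ∀ x ∈ Ioo a b, HasDerivAt g (g' x) x)
    (hpos : ∀ x ∈ Ioo a b, 0 ≤ g' x) :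
    ∫⁻ x in Ioc a b, ENNReal.ofReal (g' x) = ENNReal.ofReal (g b - g a) := by
  have hint : IntegrableOn g' (Ioc a b) :=
    intervalIntegral.integrableOn_deriv_of_nonneg hcont hderiv hpos
  rw [setLIntegral_congr Ioo_ae_eq_Ioc.symm, ← ofReal_integral_eq_lintegral_ofReal
      (hint.mono_set Ioo_subset_Ioc_self) (ae_restrict_of_forall_mem measurableSet_Ioo hpos),
    ← integral_Ioc_eq_integral_Ioo, ← intervalIntegral.integral_of_le hab,
    intervalIntegral.integral_eq_sub_of_hasDerivAt_of_le hab hcont hderiv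
      ((intervalIntegrable_iff_integrableOn_Ioc_of_le hab).2 hint)]

theorem measure_eq_sum_measure_fiber_inter {α β : Type*} [MeasurableSpace α] [Fintype β]
    (μ : Measure α) {f : α → β} (hf : ∀ b, MeasurableSet (f ⁻¹' {b})) (s : Set α) :
    μ s = ∑ b, μ (f ⁻¹' {b} ∩ s) := by
  simp_rw [← Measure.restrict_apply (hf _)]
  rw [sum_measure_preimage_singleton _ fun b _ => hf b, Finset.coe_univ, preimage_univ,
    Measure.restrict_apply_univ]

theorem sum_ofReal_card_eq_ofReal_sum_choose (L : ℕ) {f : ℕ → ℝ} (hf : ∀ m, 0 ≤ f m)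
    (hf0 : f 0 = 0) :
    ∑ T : Finset (Fin L), ENNReal.ofReal (f T.card) =
      ENNReal.ofReal (∑ k ∈ Finset.Icc 1 L, L.choose k * f k) := by
  rw [← Finset.powerset_univ, Finset.sum_powerset_apply_card (fun m => ENNReal.ofReal (f m)),
    Finset.card_univ, Fintype.card_fin, Finset.range_eq_Ico,
    Finset.sum_eq_sum_Ico_succ_bot L.succ_pos, hf0, ENNReal.ofReal_zero, smul_zero, zero_add,
    zero_add, Nat.succ_eq_add_one, Finset.Ico_add_one_right_eq_Icc,
    ENNReal.ofReal_sum_of_nonneg fun k _ => mul_nonneg (Nat.cast_nonneg _) (hf k)]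
  simp_rw [ENNReal.ofReal_mul (Nat.cast_nonneg _), ENNReal.ofReal_natCast, nsmul_eq_mul]

-- `ℙ(U₁ ⋯ U_k < u)` for independent uniform `Uᵢ`, valid for `0 < u` only.
noncomputable def prodUniformCDF (k : ℕ) (u : ℝ) : ℝ :=
  if u ≤ 1 then u * expPartialSum k (-log u) else 1

theorem prodUniformCDF_nonneg (k : ℕ) {u : ℝ} (hu : 0 < u) : 0 ≤ prodUniformCDF k u := by
  unfold prodUniformCDF
  split_ifs with hu1
  · exact mul_nonneg hu.le (expPartialSum_nonneg k (neg_nonneg.2 (log_nonpos hu.le hu1)))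
  · exact zero_le_one

theorem le_prodUniformCDF_succ (k : ℕ) {u : ℝ} (hu : 0 < u) (hu1 : u ≤ 1) :
    u ≤ prodUniformCDF (k + 1) u := by
  rw [prodUniformCDF, if_pos hu1]
  exact le_mul_of_one_le_right hu.le
    (one_le_expPartialSum_succ k (neg_nonneg.2 (log_nonpos hu.le hu1)))

theorem lintegral_prodUniformCDF_div {k : ℕ} {u : ℝ} (hu : 0 < u) (hu1 : u ≤ 1) :
    ∫⁻ a in Ioc 0 1, ENNReal.ofReal (prodUniformCDF k (u / a)) =
      ENNReal.ofReal (prodUniformCDF (k + 1) u) := by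
  set G : ℝ → ℝ := fun a => u * expPartialSum (k + 1) (log a - log u)
  have hG : ∀ a ∈ Icc u 1, HasDerivAt G (prodUniformCDF k (u / a)) a := by
    intro a ha
    have ha0 : 0 < a := hu.trans_le ha.1
    have hcdf : prodUniformCDF k (u / a) = u * (expPartialSum k (log a - log u) * a⁻¹) := by
      rw [prodUniformCDF, if_pos ((div_le_one ha0).2 ha.1), log_div hu.ne' ha0.ne']
      ring_nf
    rw [hcdf]
    exact (((hasDerivAt_expPartialSum_succ k _).comp a
      ((hasDerivAt_log ha0.ne').sub_const _)).const_mul u)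
  have hlow : ∫⁻ a in Ioc 0 u, ENNReal.ofReal (prodUniformCDF k (u / a)) = ENNReal.ofReal u := by
    simpa using lintegral_Ioc_ofReal_eq_sub_of_hasDerivAt (g' := fun a => prodUniformCDF k (u / a))
      hu.le continuousOn_id (fun a ha => by
        rw [prodUniformCDF, if_neg (not_le.2 ((one_lt_div ha.1).2 ha.2))]
        exact hasDerivAt_id a)
      (fun a ha => prodUniformCDF_nonneg k (div_pos hu ha.1))
  have hhigh : ∫⁻ a in Ioc u 1, ENNReal.ofReal (prodUniformCDF k (u / a)) =
      ENNReal.ofReal (prodUniformCDF (k + 1) u - u) := by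
    rw [lintegral_Ioc_ofReal_eq_sub_of_hasDerivAt hu1
      (fun a ha => (hG a ha).continuousAt.continuousWithinAt)
      (fun a ha => hG a (Ioo_subset_Icc_self ha))
      (fun a ha => prodUniformCDF_nonneg k (div_pos hu (hu.trans ha.1)))]
    simp [G, prodUniformCDF, hu1]
  rw [← Ioc_union_Ioc_eq_Ioc hu.le hu1, lintegral_union measurableSet_Ioc
    (Ioc_disjoint_Ioc_of_le le_rfl), hlow, hhigh, ← ENNReal.ofReal_add hu.le
    (sub_nonneg.2 (le_prodUniformCDF_succ k hu hu1)), add_sub_cancel]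

theorem pow_mul_prodUniformCDF_div_pow (n : ℕ) {τ w : ℝ} (hτ : 0 < τ) (hw : 0 < w) :
    τ ^ n * prodUniformCDF n (w / τ ^ n) =
      (if w ≤ τ ^ n then 1 else 0) * w * ∑ s ∈ Finset.range n, (n * log τ - log w) ^ s / s ! +
        (if τ ^ n < w then 1 else 0) * τ ^ n := by
  have hτn : 0 < τ ^ n := pow_pos hτ n
  simp only [prodUniformCDF, div_le_one hτn]
  split_ifs with h h' h'
  · exact absurd h' h.not_gt
  · rw [log_div hw.ne' hτn.ne', log_pow, expPartialSum]
    field_simp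
    ring_nf
  · simp
  · exact absurd (not_le.1 h) h'

noncomputable def uniformCube (ι : Type*) [Fintype ι] : Measure (ι → ℝ) :=
  Measure.pi fun _ => volume.restrict (Icc (0 : ℝ) 1)

section UniformCube

variable {ι : Type*} [Fintype ι]

theorem uniformCube_eq_restrict :
    uniformCube ι = volume.restrict (univ.pi fun _ => Icc (0 : ℝ) 1) := by
  rw [uniformCube, volume_pi, Measure.restrict_pi_pi]

theorem measurableSet_prod_lt (u : ℝ) : MeasurableSet {x : ι → ℝ | ∏ i, x i < u} :=
  measurableSet_lt (by fun_prop) measurable_const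

theorem uniformCube_prod_lt_of_one_lt {u : ℝ} (hu : 1 < u) :
    uniformCube ι {x | ∏ i, x i < u} = 1 := by
  have hcube : univ.pi (fun _ : ι => Icc (0 : ℝ) 1) ⊆ {x | ∏ i, x i < u} := fun x hx =>
    (Finset.prod_le_one (fun i _ => (hx i trivial).1) fun i _ => (hx i trivial).2).trans_lt hu
  rw [uniformCube_eq_restrict,
    Measure.restrict_apply' (MeasurableSet.univ_pi fun _ => measurableSet_Icc),
    inter_eq_right.2 hcube, volume_pi_pi]
  simp

theorem uniformCube_fin_succ_apply {n : ℕ} {s : Set (Fin (n + 1) → ℝ)} (hs : MeasurableSet s) :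
    uniformCube (Fin (n + 1)) s =
      ∫⁻ a in Icc 0 1, uniformCube (Fin n) (Fin.cons (α := fun _ => ℝ) a ⁻¹' s) := by
  have e := (measurePreserving_piFinSuccAbove
    (fun _ : Fin (n + 1) => volume.restrict (Icc (0 : ℝ) 1)) 0).symm
  rw [uniformCube, ← e.measure_preimage_equiv, Measure.prod_apply (e.measurable hs)]
  congr! 3 with a
  ext y
  simp only [mem_preimage, MeasurableEquiv.piFinSuccAbove_symm_apply, Fin.insertNthEquiv_zero]
  rfl

theorem uniformCube_prod_lt_of_equiv {ι' : Type*} [Fintype ι'] (f : ι' ≃ ι) (u : ℝ) :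
    uniformCube ι {x | ∏ i, x i < u} = uniformCube ι' {x | ∏ i, x i < u} := by
  have e := measurePreserving_piCongrLeft (fun _ : ι => volume.restrict (Icc (0 : ℝ) 1)) f
  rw [uniformCube, ← e.measure_preimage_equiv]
  congr 1
  ext x
  simp [MeasurableEquiv.coe_piCongrLeft, ← f.prod_comp]

theorem uniformCube_fin_succ_prod_lt {k : ℕ}
    (ih : ∀ v, 0 < v →
      uniformCube (Fin k) {x | ∏ i, x i < v} = ENNReal.ofReal (prodUniformCDF k v))
    {u : ℝ} (hu : 0 < u) (hu1 : u ≤ 1) :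
    uniformCube (Fin (k + 1)) {x | ∏ i, x i < u} = ENNReal.ofReal (prodUniformCDF (k + 1) u) := by
  have hsection : ∀ a ∈ Ioc (0 : ℝ) 1,
      uniformCube (Fin k) (Fin.cons (α := fun _ => ℝ) a ⁻¹' {x | ∏ i, x i < u}) =
        ENNReal.ofReal (prodUniformCDF k (u / a)) := by
    intro a ha
    rw [← ih _ (div_pos hu ha.1)]
    congr 1
    ext y
    simp [Fin.prod_cons, lt_div_iff₀ ha.1, mul_comm]
  rw [uniformCube_fin_succ_apply (measurableSet_prod_lt u),
    setLIntegral_congr Ioc_ae_eq_Icc.symm, setLIntegral_congr_fun measurableSet_Ioc hsection,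
    lintegral_prodUniformCDF_div hu hu1]

theorem uniformCube_prod_lt {u : ℝ} (hu : 0 < u) :
    uniformCube ι {x | ∏ i, x i < u} = ENNReal.ofReal (prodUniformCDF (Fintype.card ι) u) := by
  rw [uniformCube_prod_lt_of_equiv (Fintype.equivFin ι).symm]
  induction Fintype.card ι generalizing u with
  | zero =>
    obtain hu1 | hu1 := lt_or_ge 1 u
    · rw [uniformCube_prod_lt_of_one_lt hu1, prodUniformCDF, if_neg hu1.not_ge, ENNReal.ofReal_one]
    · simp [prodUniformCDF, expPartialSum, hu1, hu1.not_gt]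
  | succ k ih =>
    obtain hu1 | hu1 := lt_or_ge 1 u
    · rw [uniformCube_prod_lt_of_one_lt hu1, prodUniformCDF, if_neg hu1.not_ge, ENNReal.ofReal_one]
    · exact uniformCube_fin_succ_prod_lt (fun v hv => ih hv) hu hu1

theorem uniformCube_forall_le_and_prod_lt {τ : ℝ} (hτ0 : 0 < τ) (hτ1 : τ ≤ 1) (w : ℝ) :
    uniformCube ι {y | (∀ j, y j ≤ τ) ∧ ∏ j, y j < w} =
      ENNReal.ofReal (τ ^ Fintype.card ι) *
        uniformCube ι {y | ∏ j, y j < w / τ ^ Fintype.card ι} := by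
  have hcube : MeasurableSet (univ.pi fun _ : ι => Icc (0 : ℝ) 1) :=
    MeasurableSet.univ_pi fun _ => measurableSet_Icc
  have hprod (y : ι → ℝ) : ∏ j, τ⁻¹ * y j < w / τ ^ Fintype.card ι ↔ ∏ j, y j < w := by
    rw [Finset.prod_mul_distrib, Finset.prod_const, Finset.card_univ, inv_pow, inv_mul_eq_div,
      div_lt_div_iff_of_pos_right (by positivity)]
  have hscale : {y : ι → ℝ | (∀ j, y j ≤ τ) ∧ ∏ j, y j < w} ∩ univ.pi (fun _ => Icc 0 1) =
      τ • ({y | ∏ j, y j < w / τ ^ Fintype.card ι} ∩ univ.pi fun _ => Icc 0 1) := by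
    ext y
    simp only [mem_smul_set_iff_inv_smul_mem₀ hτ0.ne', mem_inter_iff, mem_ofPred_eq, mem_univ_pi,
      mem_Icc, Pi.smul_apply, smul_eq_mul, hprod, inv_mul_le_iff₀ hτ0, mul_one,
      mul_nonneg_iff_of_pos_left (inv_pos.2 hτ0)]
    constructor
    · rintro ⟨⟨hle, hw⟩, hy⟩
      exact ⟨hw, fun j => ⟨(hy j).1, hle j⟩⟩
    · rintro ⟨hw, hy⟩
      exact ⟨⟨fun j => (hy j).2, hw⟩, fun j => ⟨(hy j).1, (hy j).2.trans hτ1⟩⟩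
  rw [uniformCube_eq_restrict, Measure.restrict_apply' hcube, Measure.restrict_apply' hcube,
    hscale, Measure.addHaar_smul_of_nonneg _ hτ0.le, Module.finrank_fintype_fun_eq_card]

theorem measurableSet_filter_le_eq (τ : ℝ) (T : Finset ι) :
    MeasurableSet ((fun x : ι → ℝ => Finset.univ.filter (fun i => x i ≤ τ)) ⁻¹' {T}) := by
  simp only [preimage, mem_singleton_iff, Finset.ext_iff, Finset.mem_filter, Finset.mem_univ,
    true_and, ofPred_forall]
  exact MeasurableSet.iInter fun i => measurableSet_setOfPred.2 <|
    (measurableSet_setOfPred.1 (measurableSet_le (measurable_pi_apply i) measurable_const)).iff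
      measurable_const

theorem uniformCube_filter_le_eq_inter_prod_lt [DecidableEq ι] {τ : ℝ} (hτ : 0 ≤ τ) (w : ℝ)
    (T : Finset ι) :
    uniformCube ι ((fun x : ι → ℝ => Finset.univ.filter (fun i => x i ≤ τ)) ⁻¹' {T} ∩
        {x | ∏ i ∈ Finset.univ.filter (fun i => x i ≤ τ), x i < w}) =
      uniformCube T {y | (∀ j, y j ≤ τ) ∧ ∏ j, y j < w} *
        ENNReal.ofReal (1 - τ) ^ (Fintype.card ι - T.card) := by
  have e := measurePreserving_piEquivPiSubtypeProd
    (fun _ : ι => volume.restrict (Icc (0 : ℝ) 1)) (· ∈ T)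
  have hset : (fun x : ι → ℝ => Finset.univ.filter (fun i => x i ≤ τ)) ⁻¹' {T} ∩
        {x | ∏ i ∈ Finset.univ.filter (fun i => x i ≤ τ), x i < w} =
      MeasurableEquiv.piEquivPiSubtypeProd (fun _ => ℝ) (· ∈ T) ⁻¹'
        ({y | (∀ j, y j ≤ τ) ∧ ∏ j, y j < w} ×ˢ univ.pi fun _ => Ioi τ) := by
    ext x
    simp only [mem_inter_iff, mem_preimage, mem_singleton_iff, mem_ofPred_eq, mem_prod,
      mem_univ_pi, mem_Ioi, Subtype.forall, MeasurableEquiv.piEquivPiSubtypeProd_apply,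
      Finset.prod_coe_sort]
    constructor
    · rintro ⟨rfl, hw⟩
      simp_all
    · rintro ⟨⟨hle, hw⟩, hgt⟩
      have hT : Finset.univ.filter (fun i => x i ≤ τ) = T := by
        ext i
        simp only [Finset.mem_filter, Finset.mem_univ, true_and]
        exact ⟨fun h => by_contra fun hi => (hgt i hi).not_ge h, hle i⟩
      exact ⟨hT, hT ▸ hw⟩
  rw [uniformCube, hset, e.measure_preimage_equiv, Measure.prod_prod, Measure.pi_pi]
  have hIoi : volume.restrict (Icc (0 : ℝ) 1) (Ioi τ) = ENNReal.ofReal (1 - τ) := by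
    have : Ioi τ ∩ Icc 0 1 = Ioc τ 1 :=
      Set.ext fun x => ⟨fun ⟨h, _, h1⟩ => ⟨h, h1⟩, fun ⟨h, h1⟩ => ⟨h, hτ.trans h.le, h1⟩⟩
    rw [Measure.restrict_apply measurableSet_Ioi, this, Real.volume_Ioc]
  rw [Finset.prod_const, hIoi, Finset.card_univ, Fintype.card_subtype_compl, Fintype.card_coe,
    uniformCube]
  congr!

end UniformCube

theorem truncated_product_distribution_general
    (L : ℕ) (τ : ℝ) (hτ0 : 0 < τ) (hτ1 : τ ≤ 1)
    (w : ℝ) (hw0 : 0 < w) (hw1 : w ≤ 1) :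
    (volume : Measure (Fin L → ℝ)).restrict (Set.univ.pi fun _ => Set.Icc (0 : ℝ) 1)
        {x : Fin L → ℝ | (∏ k ∈ Finset.univ.filter (fun k => x k ≤ τ), x k) < w} =
      ENNReal.ofReal (∑ k ∈ Finset.Icc 1 L,
        (Nat.choose L k : ℝ) * (1 - τ) ^ (L - k) *
          ((if w ≤ τ ^ k then (1 : ℝ) else 0) * w *
              (∑ s ∈ Finset.range k,
                (k * Real.log τ - Real.log w) ^ s / (Nat.factorial s : ℝ)) +
            (if τ ^ k < w then (1 : ℝ) else 0) * τ ^ k)) := by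
  classical
  set term : ℕ → ℝ := fun m => (1 - τ) ^ (L - m) * (τ ^ m * prodUniformCDF m (w / τ ^ m))
  have hterm_nonneg (m : ℕ) : 0 ≤ term m :=
    mul_nonneg (pow_nonneg (sub_nonneg.2 hτ1) _)
      (mul_nonneg (pow_nonneg hτ0.le _) (prodUniformCDF_nonneg m (by positivity)))
  have hfiber (T : Finset (Fin L)) :
      uniformCube (Fin L) ((fun x : Fin L → ℝ => Finset.univ.filter (fun k => x k ≤ τ)) ⁻¹' {T} ∩
        {x | ∏ k ∈ Finset.univ.filter (fun k => x k ≤ τ), x k < w}) =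
        ENNReal.ofReal (term T.card) := by
    rw [uniformCube_filter_le_eq_inter_prod_lt hτ0.le, uniformCube_forall_le_and_prod_lt hτ0 hτ1,
      uniformCube_prod_lt (by positivity), Fintype.card_coe, Fintype.card_fin,
      ← ENNReal.ofReal_pow (sub_nonneg.2 hτ1), mul_comm, ← ENNReal.ofReal_mul (by positivity),
      ← ENNReal.ofReal_mul (pow_nonneg (sub_nonneg.2 hτ1) _)]
  rw [← uniformCube_eq_restrict,
    measure_eq_sum_measure_fiber_inter _ (measurableSet_filter_le_eq τ),
    Finset.sum_congr rfl fun T _ => hfiber T,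
    sum_ofReal_card_eq_ofReal_sum_choose L hterm_nonneg
      (by simp [term, prodUniformCDF, expPartialSum, hw1])]
  refine congrArg ENNReal.ofReal (Finset.sum_congr rfl fun k _ => ?_)
  rw [mul_assoc, ← pow_mul_prodUniformCDF_div_pow k hτ0 hw0]

/-- Equation (6) of the paper: the exact distribution of Zaykin's truncated
product of `L` i.i.d. Uniform[0,1] P-values (Lebesgue measure on the unit cube),
with truncation threshold `τ`. -/
theorem truncated_product_distribution
    (L : ℕ) (hL : 1 ≤ L) (τ : ℝ) (hτ0 : 0 < τ) (hτ1 : τ ≤ 1)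
    (w : ℝ) (hw0 : 0 < w) (hw1 : w ≤ 1) :
    (volume : Measure (Fin L → ℝ)).restrict (Set.univ.pi fun _ => Set.Icc (0 : ℝ) 1)
        {x : Fin L → ℝ | (∏ k ∈ Finset.univ.filter (fun k => x k ≤ τ), x k) < w} =
      ENNReal.ofReal (∑ k ∈ Finset.Icc 1 L,
        (Nat.choose L k : ℝ) * (1 - τ) ^ (L - k) *
          ((if w ≤ τ ^ k then (1 : ℝ) else 0) * w *
              (∑ s ∈ Finset.range k,
                (k * Real.log τ - Real.log w) ^ s / (Nat.factorial s : ℝ)) +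
            (if τ ^ k < w then (1 : ℝ) else 0) * τ ^ k)) :=
  truncated_product_distribution_general L τ hτ0 hτ1 w hw0 hw1
end

section
/- Let L ≥ 1 be an integer and τ ∈ (0,1] a real number. Let X_1, …, X_L be independent random variables with values in [0,1] that are stochastically larger than Uniform[0,1], i.e., ℙ(X_k ≤ t) ≤ t for all t ∈ [0,1] and every k. Define the truncated product W = ∏_{k : X_k ≤ τ} X_k (an empty product equals 1). Then for every w with 0 < w ≤ 1, ℙ(W < w) ≤ Σ_{k=1}^{L} C(L,k)·(1 − τ)^{L−k} · ( 1{w ≤ τ^k} · w · Σ_{s=0}^{k−1} (k·ln τ − ln w)^s / s! + 1{w > τ^k} · τ^k ), where C(L,k) is the binomial coefficient. -/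
/-!
Let `F_n(w)` be the right-hand side of (6) with `n` P-values; it is the distribution function of
the truncated product of `n` i.i.d. uniforms, and `F_n = ∑ₖ C(n,k) (1-τ)^(n-k) G_k` where
`G_k(w) = ℙ(U₁ ⋯ U_k < w, all U_i ≤ τ)`. Induct on the number of P-values. Writing `t(x)` for
`x` if `x ≤ τ` and `1` otherwise, independence gives `ℙ(t(X) W < w) ≤ 𝔼 F_n(w / t(X))` for a new
P-value `X` and the truncated product `W` of the others. The integrand is a decreasing function
of `X`, and `X` is stochastically larger than a uniform, so the expectation is at most the
Lebesgue integral over `(0, 1]`. That integral is `F_{n+1}(w)`, by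
`∫₀^τ G_k(w / x) dx = G_{k+1}(w)` and Pascal's rule.
-/

open MeasureTheory ProbabilityTheory Set Real Finset
open scoped Nat

namespace TruncatedProduct

/-- `ℙ(U₁ ⋯ U_k < w, U₁ ≤ τ, …, U_k ≤ τ)` for i.i.d. uniform `U_i`, for `0 < w`. -/
noncomputable def cutProdCDF (τ : ℝ) (k : ℕ) (w : ℝ) : ℝ :=
  if w ≤ τ ^ k then w * ∑ s ∈ range k, (k * log τ - log w) ^ s / (s ! : ℝ) else τ ^ k

variable {τ w : ℝ}

theorem measurable_cutProdCDF (τ : ℝ) (k : ℕ) : Measurable (cutProdCDF τ k) :=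
  Measurable.ite (measurableSet_le measurable_id measurable_const)
    (measurable_id.mul (Finset.measurable_sum _ fun _ _ =>
      ((measurable_const.sub measurable_log).pow_const _).div_const _))
    measurable_const

theorem cutProdCDF_of_pow_lt {k : ℕ} (h : τ ^ k < w) : cutProdCDF τ k w = τ ^ k :=
  if_neg h.not_ge

theorem cutProdCDF_of_le_pow {k : ℕ} (h : w ≤ τ ^ k) :
    cutProdCDF τ k w = w * ∑ s ∈ range k, (k * log τ - log w) ^ s / (s ! : ℝ) :=
  if_pos h

theorem cutProdCDF_zero_of_le_one (hw : w ≤ 1) : cutProdCDF τ 0 w = 0 := by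
  simp [cutProdCDF, hw]

theorem cutProdCDF_zero_of_one_lt (hw : 1 < w) : cutProdCDF τ 0 w = 1 := by
  simp [cutProdCDF, hw.not_ge]

theorem cutProdCDF_pow_self (τ : ℝ) (m : ℕ) : cutProdCDF τ (m + 1) (τ ^ (m + 1)) = τ ^ (m + 1) := by
  rw [cutProdCDF_of_le_pow le_rfl, log_pow, sub_self, Finset.sum_eq_single 0]
  · simp
  · intro s _ hs; simp [zero_pow hs]
  · simp

theorem log_pow_sub_log_nonneg (hw : 0 < w) {k : ℕ} (h : w ≤ τ ^ k) :
    0 ≤ k * log τ - log w := by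
  rw [← log_pow, sub_nonneg]
  exact log_le_log hw h

theorem cutProdCDF_nonneg (hτ : 0 < τ) (hw : 0 < w) (k : ℕ) : 0 ≤ cutProdCDF τ k w := by
  rcases le_or_gt w (τ ^ k) with h | h
  · rw [cutProdCDF_of_le_pow h]
    have := log_pow_sub_log_nonneg hw h
    positivity
  · rw [cutProdCDF_of_pow_lt h]
    positivity

theorem cutProdCDF_le_pow (hτ : 0 < τ) (hw : 0 < w) (k : ℕ) : cutProdCDF τ k w ≤ τ ^ k := by
  rcases le_or_gt w (τ ^ k) with h | h
  · rw [cutProdCDF_of_le_pow h]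
    calc w * ∑ s ∈ range k, (k * log τ - log w) ^ s / (s ! : ℝ)
        ≤ w * exp (k * log τ - log w) := by
          gcongr; exact sum_le_exp_of_nonneg (log_pow_sub_log_nonneg hw h) k
      _ = τ ^ k := by
          rw [exp_sub, exp_log hw, ← log_pow, exp_log (pow_pos hτ k)]
          field_simp
  · exact (cutProdCDF_of_pow_lt h).le

theorem intervalIntegrable_cutProdCDF_div (hτ : 0 < τ) (hw : 0 < w) (k : ℕ) :
    IntervalIntegrable (fun x => cutProdCDF τ k (w / x)) volume 0 τ := by
  rw [intervalIntegrable_iff_integrableOn_Ioc_of_le hτ.le]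
  refine Measure.integrableOn_of_bounded (M := τ ^ k) measure_Ioc_lt_top.ne
    ((measurable_cutProdCDF τ k).comp (measurable_const.div measurable_id)).aestronglyMeasurable ?_
  filter_upwards [ae_restrict_mem measurableSet_Ioc] with x hx
  have hwx : 0 < w / x := div_pos hw hx.1
  rw [norm_of_nonneg (cutProdCDF_nonneg hτ hwx k)]
  exact cutProdCDF_le_pow hτ hwx k

theorem intervalIntegral_eq_of_eqOn_Ioo {f : ℝ → ℝ} {a b c : ℝ} (hab : a ≤ b)
    (h : EqOn f (fun _ => c) (Ioo a b)) : ∫ x in a..b, f x = (b - a) * c := by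
  rw [intervalIntegral.integral_of_le hab, integral_Ioc_eq_integral_Ioo,
    setIntegral_congr_fun measurableSet_Ioo h, setIntegral_const, volume_real_Ioo_of_le hab,
    smul_eq_mul]

theorem hasDerivAt_sum_log_sub_pow_succ (b : ℝ) (m : ℕ) {x : ℝ} (hx : 0 < x) :
    HasDerivAt (fun y => ∑ s ∈ range m, (log y - b) ^ (s + 1) / ((s + 1) ! : ℝ))
      (x⁻¹ * ∑ s ∈ range m, (log x - b) ^ s / (s ! : ℝ)) x := by
  rw [Finset.mul_sum]
  refine HasDerivAt.fun_sum fun s _ => ?_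
  refine ((((hasDerivAt_log hx.ne').sub_const b).pow (s + 1)).div_const _).congr_deriv ?_
  rw [Nat.factorial_succ, Nat.add_sub_cancel]
  push_cast
  field_simp

theorem integral_cutProdCDF_div_of_pow_succ_le (hτ : 0 < τ) {m : ℕ} (h : τ ^ (m + 1) ≤ w) :
    ∫ x in 0..τ, cutProdCDF τ m (w / x) = cutProdCDF τ (m + 1) w := by
  have hw : 0 < w := (pow_pos hτ _).trans_le h
  have hconst : EqOn (fun x => cutProdCDF τ m (w / x)) (fun _ => τ ^ m) (Ioo 0 τ) := by
    intro x hx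
    refine cutProdCDF_of_pow_lt ((le_div_iff₀ hτ).2 ?_ |>.trans_lt
      (div_lt_div_of_pos_left hw hx.1 hx.2))
    rwa [← pow_succ]
  rw [intervalIntegral_eq_of_eqOn_Ioo hτ.le hconst]
  rcases h.eq_or_lt with rfl | hlt
  · rw [cutProdCDF_pow_self, pow_succ]; ring
  · rw [cutProdCDF_of_pow_lt hlt, pow_succ]; ring

theorem integral_cutProdCDF_div_from_pow_div (hτ : 0 < τ) (hw : 0 < w) {m : ℕ}
    (h : w / τ ^ m ≤ τ) :
    ∫ x in w / τ ^ m..τ, cutProdCDF τ m (w / x) =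
      w * ∑ s ∈ range m, ((m + 1 : ℕ) * log τ - log w) ^ (s + 1) / ((s + 1) ! : ℝ) := by
  have hτm : 0 < τ ^ m := pow_pos hτ m
  set c := w / τ ^ m with hc_def
  have hc : 0 < c := div_pos hw hτm
  have hpos : ∀ x ∈ uIcc c τ, 0 < x := fun x hx => hc.trans_le (uIcc_of_le h ▸ hx).1
  have hne : ∀ x ∈ uIcc c τ, x ≠ 0 := fun x hx => (hpos x hx).ne'
  have hEq : EqOn (fun x => cutProdCDF τ m (w / x))
      (fun x => w * (x⁻¹ * ∑ s ∈ range m, (log x - log c) ^ s / (s ! : ℝ))) (uIcc c τ) := by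
    intro x hx
    have hcx := (uIcc_of_le h ▸ hx).1
    rw [hc_def, div_le_iff₀' hτm] at hcx
    dsimp only
    rw [cutProdCDF_of_le_pow ((div_le_iff₀ (hpos x hx)).2 hcx), ← mul_assoc, ← div_eq_mul_inv]
    congr 1
    refine sum_congr rfl fun s _ => ?_
    rw [hc_def, log_div hw.ne' (hne x hx), log_div hw.ne' hτm.ne', Real.log_pow]
    ring
  have hlog : log τ - log c = (m + 1 : ℕ) * log τ - log w := by
    rw [hc_def, log_div hw.ne' hτm.ne', Real.log_pow]; push_cast; ring
  rw [intervalIntegral.integral_congr hEq, intervalIntegral.integral_const_mul,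
    intervalIntegral.integral_eq_sub_of_hasDerivAt
      (fun x hx => hasDerivAt_sum_log_sub_pow_succ (log c) m (hpos x hx))]
  · simp [hlog]
  · refine ContinuousOn.intervalIntegrable ((continuousOn_id.inv₀ hne).mul ?_)
    exact continuousOn_finsetSum _ fun s _ =>
      ((continuousOn_id.log hne).sub continuousOn_const).pow s |>.div_const _

theorem integral_cutProdCDF_div_of_lt_pow_succ (hτ : 0 < τ) (hw : 0 < w) {m : ℕ}
    (h : w < τ ^ (m + 1)) :
    ∫ x in 0..τ, cutProdCDF τ m (w / x) = cutProdCDF τ (m + 1) w := by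
  have hτm : 0 < τ ^ m := pow_pos hτ m
  have hc : 0 < w / τ ^ m := div_pos hw hτm
  have hcτ : w / τ ^ m < τ := by rwa [div_lt_iff₀ hτm, ← pow_succ']
  have below : EqOn (fun x => cutProdCDF τ m (w / x)) (fun _ => τ ^ m) (Ioo 0 (w / τ ^ m)) :=
    fun x hx => cutProdCDF_of_pow_lt ((lt_div_iff₀ hx.1).2 ((lt_div_iff₀' hτm).1 hx.2))
  have hcmem : w / τ ^ m ∈ uIcc 0 τ := by rw [uIcc_of_le hτ.le]; exact ⟨hc.le, hcτ.le⟩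
  have hint := intervalIntegrable_cutProdCDF_div hτ hw m
  rw [← intervalIntegral.integral_add_adjacent_intervals
      (hint.mono_set (uIcc_subset_uIcc_left hcmem)) (hint.mono_set (uIcc_subset_uIcc_right hcmem)),
    intervalIntegral_eq_of_eqOn_Ioo hc.le below, integral_cutProdCDF_div_from_pow_div hτ hw hcτ.le,
    cutProdCDF_of_le_pow h.le, sum_range_succ', sub_zero, div_mul_cancel₀ _ hτm.ne']
  simp only [pow_zero, Nat.factorial_zero, Nat.cast_one, div_one]
  ring

theorem integral_cutProdCDF_div (hτ : 0 < τ) (hw : 0 < w) (m : ℕ) :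
    ∫ x in 0..τ, cutProdCDF τ m (w / x) = cutProdCDF τ (m + 1) w := by
  rcases le_or_gt (τ ^ (m + 1)) w with h | h
  · exact integral_cutProdCDF_div_of_pow_succ_le hτ h
  · exact integral_cutProdCDF_div_of_lt_pow_succ hτ hw h

theorem monotoneOn_cutProdCDF (hτ : 0 < τ) (k : ℕ) : MonotoneOn (cutProdCDF τ k) (Ioi 0) := by
  induction k with
  | zero =>
    intro u _ v _ huv
    unfold cutProdCDF
    split_ifs <;> norm_num
    linarith
  | succ m ih =>
    intro u hu v hv huv
    rw [← integral_cutProdCDF_div hτ hu, ← integral_cutProdCDF_div hτ hv]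
    refine intervalIntegral.integral_mono_on hτ.le (intervalIntegrable_cutProdCDF_div hτ hu m)
      (intervalIntegrable_cutProdCDF_div hτ hv m) fun x hx => ?_
    rcases hx.1.eq_or_lt with rfl | hx0
    · simp
    · exact ih (div_pos hu hx0) (div_pos hv hx0) (by gcongr)

/-- The right-hand side of (6) for `n` P-values: the distribution function of the truncated
product of `n` i.i.d. uniform variables, split by the number `k` of them below `τ`. -/
noncomputable def truncProdCDF (τ : ℝ) (n : ℕ) (w : ℝ) : ℝ :=
  ∑ k ∈ range (n + 1), n.choose k * ((1 - τ) ^ (n - k) * cutProdCDF τ k w)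

theorem measurable_truncProdCDF (τ : ℝ) (n : ℕ) : Measurable (truncProdCDF τ n) :=
  Finset.measurable_sum _ fun k _ => ((measurable_cutProdCDF τ k).const_mul _).const_mul _

theorem truncProdCDF_nonneg (hτ0 : 0 < τ) (hτ1 : τ ≤ 1) (hw : 0 < w) (n : ℕ) :
    0 ≤ truncProdCDF τ n w := by
  have : 0 ≤ 1 - τ := sub_nonneg.2 hτ1
  exact sum_nonneg fun k _ => by have := cutProdCDF_nonneg hτ0 hw k; positivity

theorem monotoneOn_truncProdCDF (hτ0 : 0 < τ) (hτ1 : τ ≤ 1) (n : ℕ) :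
    MonotoneOn (truncProdCDF τ n) (Ioi 0) := fun u hu v hv huv =>
  Finset.sum_le_sum fun k _ => by
    have : 0 ≤ 1 - τ := sub_nonneg.2 hτ1
    gcongr
    exact monotoneOn_cutProdCDF hτ0 k hu hv huv

theorem intervalIntegrable_truncProdCDF_div (hτ : 0 < τ) (hw : 0 < w) (n : ℕ) :
    IntervalIntegrable (fun x => truncProdCDF τ n (w / x)) volume 0 τ := by
  simpa only [truncProdCDF, Finset.sum_fn] using IntervalIntegrable.sum (range (n + 1)) fun k _ =>
    ((intervalIntegrable_cutProdCDF_div hτ hw k).const_mul _).const_mul _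

theorem integral_truncProdCDF_div (hτ : 0 < τ) (hw : 0 < w) (n : ℕ) :
    ∫ x in 0..τ, truncProdCDF τ n (w / x) =
      ∑ k ∈ range (n + 1), n.choose k * ((1 - τ) ^ (n - k) * cutProdCDF τ (k + 1) w) := by
  simp only [truncProdCDF]
  rw [intervalIntegral.integral_finsetSum fun k _ =>
    ((intervalIntegrable_cutProdCDF_div hτ hw k).const_mul _).const_mul _]
  refine sum_congr rfl fun k _ => ?_
  rw [intervalIntegral.integral_const_mul, intervalIntegral.integral_const_mul,
    integral_cutProdCDF_div hτ hw]

theorem truncProdCDF_succ (hτ : 0 < τ) (hw : 0 < w) (n : ℕ) :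
    truncProdCDF τ (n + 1) w =
      (1 - τ) * truncProdCDF τ n w + ∫ x in 0..τ, truncProdCDF τ n (w / x) := by
  rw [truncProdCDF, sum_choose_succ_mul (fun k j => (1 - τ) ^ j * cutProdCDF τ k w),
    integral_truncProdCDF_div hτ hw, truncProdCDF, Finset.mul_sum]
  congr 1
  refine sum_congr rfl fun k hk => ?_
  rw [Nat.sub_add_comm (Nat.lt_succ_iff.1 (mem_range.1 hk)), pow_succ]
  ring

noncomputable def truncate (τ x : ℝ) : ℝ := if x ≤ τ then x else 1

theorem measurable_truncate (τ : ℝ) : Measurable (truncate τ) :=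
  Measurable.ite (measurableSet_le measurable_id measurable_const) measurable_id measurable_const

theorem truncate_pos {x : ℝ} (hx : 0 < x) : 0 < truncate τ x := by
  unfold truncate; split_ifs <;> positivity

theorem monotone_truncate (hτ : τ ≤ 1) : Monotone (truncate τ) := by
  intro x y hxy; unfold truncate; split_ifs <;> linarith

theorem lintegral_comp_truncate (hτ0 : 0 < τ) (hτ1 : τ ≤ 1) {f : ℝ → ℝ}
    (hf : IntegrableOn f (Ioc 0 τ)) (hf0 : ∀ x ∈ Ioc 0 τ, 0 ≤ f x) (hf1 : 0 ≤ f 1) :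
    ∫⁻ x in Ioc 0 1, ENNReal.ofReal (f (truncate τ x)) =
      ENNReal.ofReal ((1 - τ) * f 1 + ∫ x in 0..τ, f x) := by
  have below : ∫⁻ x in Ioc 0 τ, ENNReal.ofReal (f (truncate τ x)) =
      ENNReal.ofReal (∫ x in 0..τ, f x) := by
    rw [setLIntegral_congr_fun measurableSet_Ioc fun x hx => by rw [truncate, if_pos hx.2],
      ← ofReal_integral_eq_lintegral_ofReal hf (ae_restrict_of_forall_mem measurableSet_Ioc hf0),
      intervalIntegral.integral_of_le hτ0.le]
  have above : ∫⁻ x in Ioc τ 1, ENNReal.ofReal (f (truncate τ x)) =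
      ENNReal.ofReal ((1 - τ) * f 1) := by
    rw [setLIntegral_congr_fun measurableSet_Ioc fun x hx => by rw [truncate, if_neg hx.1.not_ge],
      setLIntegral_const, Real.volume_Ioc, ← ENNReal.ofReal_mul hf1, mul_comm]
  have hI : 0 ≤ ∫ x in 0..τ, f x := by
    rw [intervalIntegral.integral_of_le hτ0.le]
    exact setIntegral_nonneg measurableSet_Ioc hf0
  rw [← Ioc_union_Ioc_eq_Ioc hτ0.le hτ1,
    lintegral_union measurableSet_Ioc (Ioc_disjoint_Ioc_of_le le_rfl), below, above, add_comm,
    ← ENNReal.ofReal_add (mul_nonneg (sub_nonneg.2 hτ1) hf1) hI]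

theorem measure_le_volume_inter_Ioc {μ : Measure ℝ} [IsProbabilityMeasure μ]
    (hμ : ∀ t ∈ Icc (0 : ℝ) 1, μ (Iic t) ≤ ENNReal.ofReal t) {S : Set ℝ}
    (hS : ∀ x ∈ S, Ioc 0 x ⊆ S) : μ S ≤ volume (S ∩ Ioc 0 1) := by
  -- `S ∩ Ioc 0 1` contains `Ioo 0 a`, and `S ⊆ Iic a` unless `S` contains a point beyond `1`.
  set a := sSup (S ∩ Ioc 0 1)
  have hbdd : BddAbove (S ∩ Ioc 0 1) := ⟨1, fun x hx => hx.2.2⟩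
  have ha0 : 0 ≤ a := Real.sSup_nonneg fun x hx => hx.2.1.le
  have ha1 : a ≤ 1 := Real.sSup_le (fun x hx => hx.2.2) zero_le_one
  have upper : μ S ≤ ENNReal.ofReal a := by
    by_cases hbig : ∃ x ∈ S, 1 < x
    · obtain ⟨x, hx, h1x⟩ := hbig
      have : a = 1 := le_antisymm ha1
        (le_csSup hbdd ⟨hS x hx ⟨one_pos, h1x.le⟩, one_pos, le_rfl⟩)
      rw [this, ENNReal.ofReal_one]
      exact prob_le_one
    · push Not at hbig
      refine (measure_mono fun x hx => ?_).trans (hμ a ⟨ha0, ha1⟩)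
      rcases le_or_gt x 0 with hx0 | hx0
      · exact hx0.trans ha0
      · exact le_csSup hbdd ⟨hx, hx0, hbig x hx⟩
  have lower : ENNReal.ofReal a ≤ volume (S ∩ Ioc 0 1) := by
    rcases (S ∩ Ioc 0 1).eq_empty_or_nonempty with hempty | hne
    · simp [a, hempty]
    · rw [← sub_zero a, ← Real.volume_Ioo]
      refine measure_mono fun y hy => ?_
      obtain ⟨x, hx, hyx⟩ := exists_lt_of_lt_csSup hne hy.2
      exact ⟨hS x hx.1 ⟨hy.1, hyx.le⟩, hy.1, hyx.le.trans hx.2.2⟩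
  exact upper.trans lower

theorem lintegral_le_setLIntegral_Ioc_of_antitoneOn {μ : Measure ℝ} [IsProbabilityMeasure μ]
    (hμ : ∀ t ∈ Icc (0 : ℝ) 1, μ (Iic t) ≤ ENNReal.ofReal t) {f : ℝ → ℝ} (hfm : Measurable f)
    (hf : AntitoneOn f (Ioi 0)) :
    ∫⁻ x, ENNReal.ofReal (f x) ∂μ ≤ ∫⁻ x in Ioc 0 1, ENNReal.ofReal (f x) := by
  have hpos : ∀ x, ENNReal.ofReal (f x) = ENNReal.ofReal (max (f x) 0) := by simp
  have hnn : ∀ {ν : Measure ℝ}, 0 ≤ᵐ[ν] fun x => max (f x) 0 :=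
    ae_of_all _ fun _ => le_max_right _ _
  have hm : Measurable fun x => max (f x) 0 := hfm.max measurable_const
  simp_rw [hpos]
  rw [lintegral_eq_lintegral_meas_le μ hnn hm.aemeasurable,
    lintegral_eq_lintegral_meas_le _ hnn hm.aemeasurable]
  refine lintegral_mono fun t => ?_
  rw [Measure.restrict_apply' measurableSet_Ioc]
  refine measure_le_volume_inter_Ioc hμ fun x hx y hy => ?_
  exact hx.trans (max_le_max (hf hy.1 (hy.1.trans_le hy.2) hy.2) le_rfl)

section Probability

variable {Ω : Type*} [MeasurableSpace Ω] {P : Measure Ω}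

theorem measure_truncate_mul_lt_le [IsProbabilityMeasure P] {Z W : Ω → ℝ} (hZ : Measurable Z)
    (hW : Measurable W) (hZW : IndepFun Z W P)
    (hZvalid : ∀ t ∈ Icc (0 : ℝ) 1, P {ω | Z ω ≤ t} ≤ ENNReal.ofReal t) (hτ : τ ≤ 1)
    {H : ℝ → ℝ} (hHm : Measurable H) (hH : MonotoneOn H (Ioi 0))
    (hWH : ∀ u, 0 < u → P {ω | W ω < u} ≤ ENNReal.ofReal (H u)) (hw : 0 < w) :
    P {ω | truncate τ (Z ω) * W ω < w} ≤
      ∫⁻ x in Ioc 0 1, ENNReal.ofReal (H (w / truncate τ x)) := by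
  set μ := P.map Z
  have : IsProbabilityMeasure μ := Measure.isProbabilityMeasure_map hZ.aemeasurable
  have hμ : ∀ t ∈ Icc (0 : ℝ) 1, μ (Iic t) ≤ ENNReal.ofReal t := fun t ht => by
    rw [Measure.map_apply hZ measurableSet_Iic]
    exact hZvalid t ht
  have hpos : ∀ᵐ x ∂μ, 0 < x := by
    have h0 : μ (Iic 0) = 0 := by simpa using hμ 0 ⟨le_rfl, zero_le_one⟩
    exact (measure_eq_zero_iff_ae_notMem.1 h0).mono fun x hx => not_le.1 hx
  set E := {p : ℝ × ℝ | truncate τ p.1 * p.2 < w}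
  have hE : MeasurableSet E :=
    measurableSet_lt (((measurable_truncate τ).comp measurable_fst).mul measurable_snd)
      measurable_const
  calc P {ω | truncate τ (Z ω) * W ω < w} = (μ.prod (P.map W)) E := by
        rw [← (indepFun_iff_map_prod_eq_prod_map_map hZ.aemeasurable hW.aemeasurable).1 hZW,
          Measure.map_apply (hZ.prodMk hW) hE]
        rfl
    _ = ∫⁻ x, P.map W (Prod.mk x ⁻¹' E) ∂μ := Measure.prod_apply hE
    _ ≤ ∫⁻ x, ENNReal.ofReal (H (w / truncate τ x)) ∂μ := by
        refine lintegral_mono_ae (hpos.mono fun x hx => ?_)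
        have ht := truncate_pos (τ := τ) hx
        rw [Measure.map_apply hW (measurable_prodMk_left hE)]
        convert hWH _ (div_pos hw ht) using 2
        ext ω
        simp [E, lt_div_iff₀' ht]
    _ ≤ _ := by
        refine lintegral_le_setLIntegral_Ioc_of_antitoneOn hμ
          (hHm.comp (measurable_const.div (measurable_truncate τ))) fun x hx y hy hxy => ?_
        have hx' := truncate_pos (τ := τ) hx
        have hy' := truncate_pos (τ := τ) hy
        exact hH (div_pos hw hy') (div_pos hw hx')
          (div_le_div_of_nonneg_left hw.le hx' (monotone_truncate hτ hxy))

variable {ι : Type*} {X : ι → Ω → ℝ}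

theorem indepFun_prod_truncate (hX : ∀ k, Measurable (X k)) (hindep : iIndepFun X P) {a : ι}
    {s : Finset ι} (ha : a ∉ s) (τ : ℝ) :
    IndepFun (X a) (fun ω => ∏ k ∈ s, truncate τ (X k ω)) P := by
  have h := (hindep.indepFun_finset {a} s (disjoint_singleton_left.2 ha) hX).comp
    (measurable_pi_apply ⟨a, mem_singleton_self a⟩)
    (Finset.measurable_prod univ fun k _ => (measurable_truncate τ).comp (measurable_pi_apply k))
  convert h using 1
  · rfl
  ext ω
  exact (prod_coe_sort s fun k => truncate τ (X k ω)).symm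

theorem measure_prod_truncate_lt_le [IsProbabilityMeasure P] (hτ0 : 0 < τ) (hτ1 : τ ≤ 1)
    (hX : ∀ k, Measurable (X k)) (hindep : iIndepFun X P)
    (hvalid : ∀ k, ∀ t ∈ Icc (0 : ℝ) 1, P {ω | X k ω ≤ t} ≤ ENNReal.ofReal t)
    (s : Finset ι) (hw : 0 < w) :
    P {ω | ∏ k ∈ s, truncate τ (X k ω) < w} ≤ ENNReal.ofReal (truncProdCDF τ s.card w) := by
  induction s using Finset.cons_induction generalizing w with
  | empty =>
    rcases le_or_gt w 1 with h | h
    · simp [h.not_gt]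
    · simpa [truncProdCDF, cutProdCDF_zero_of_one_lt h] using prob_le_one
  | cons a s ha ih =>
    have hf := intervalIntegrable_truncProdCDF_div hτ0 hw s.card
    simp only [prod_cons, card_cons]
    calc _ ≤ ∫⁻ x in Ioc 0 1, ENNReal.ofReal (truncProdCDF τ s.card (w / truncate τ x)) :=
          measure_truncate_mul_lt_le (hX a) (Finset.measurable_prod s fun k _ =>
            (measurable_truncate τ).comp (hX k)) (indepFun_prod_truncate hX hindep ha τ)
            (hvalid a) hτ1 (measurable_truncProdCDF τ _) (monotoneOn_truncProdCDF hτ0 hτ1 _)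
            (fun u hu => ih hu) hw
      _ = ENNReal.ofReal (truncProdCDF τ (s.card + 1) w) := by
          rw [lintegral_comp_truncate hτ0 hτ1 (f := fun u => truncProdCDF τ s.card (w / u)) hf.1
            (fun x hx => truncProdCDF_nonneg hτ0 hτ1 (div_pos hw hx.1) _)
            (truncProdCDF_nonneg hτ0 hτ1 (div_pos hw one_pos) _), div_one,
            truncProdCDF_succ hτ0 hw]

end Probability

end TruncatedProduct

open TruncatedProduct in
theorem truncated_product_valid_general
    (L : ℕ) (τ : ℝ) (hτ0 : 0 < τ) (hτ1 : τ ≤ 1)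
    (Ω : Type*) [MeasurableSpace Ω] (P : Measure Ω) [IsProbabilityMeasure P]
    (X : Fin L → Ω → ℝ) (hXmeas : ∀ k, Measurable (X k))
    (hXindep : iIndepFun X P)
    (hXvalid : ∀ k, ∀ t ∈ Set.Icc (0 : ℝ) 1, P {ω | X k ω ≤ t} ≤ ENNReal.ofReal t)
    (w : ℝ) (hw0 : 0 < w) (hw1 : w ≤ 1) :
    P {ω | (∏ k ∈ Finset.univ.filter (fun k => X k ω ≤ τ), X k ω) < w} ≤
      ENNReal.ofReal (∑ k ∈ Finset.Icc 1 L,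
        (Nat.choose L k : ℝ) * (1 - τ) ^ (L - k) *
          ((if w ≤ τ ^ k then (1 : ℝ) else 0) * w *
              (∑ s ∈ Finset.range k,
                (k * Real.log τ - Real.log w) ^ s / (Nat.factorial s : ℝ)) +
            (if τ ^ k < w then (1 : ℝ) else 0) * τ ^ k)) := by
  simp only [prod_filter]
  refine (measure_prod_truncate_lt_le hτ0 hτ1 hXmeas hXindep hXvalid univ hw0).trans_eq ?_
  have hrange : range (L + 1) = insert 0 (Finset.Icc 1 L) := by
    ext k; simp only [Finset.mem_range, Finset.mem_insert, Finset.mem_Icc]; omega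
  rw [card_univ, Fintype.card_fin, truncProdCDF, hrange, sum_insert (by simp),
    cutProdCDF_zero_of_le_one hw1, mul_zero, mul_zero, zero_add]
  congr 1
  refine sum_congr rfl fun k _ => ?_
  rcases le_or_gt w (τ ^ k) with h | h
  · simp [cutProdCDF_of_le_pow h, h, h.not_gt, mul_assoc]
  · simp [cutProdCDF_of_pow_lt h, h, h.not_ge, mul_assoc]

/-- Validity of Zaykin's truncated product of P-values: for independent
P-values that are stochastically larger than Uniform[0,1], the distribution of
the truncated product is bounded by the right-hand side of equation (6). -/
theorem truncated_product_valid
    (L : ℕ) (hL : 1 ≤ L) (τ : ℝ) (hτ0 : 0 < τ) (hτ1 : τ ≤ 1)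
    (Ω : Type*) [MeasurableSpace Ω] (P : Measure Ω) [IsProbabilityMeasure P]
    (X : Fin L → Ω → ℝ) (hXmeas : ∀ k, Measurable (X k))
    (hXindep : iIndepFun X P)
    (hXrange : ∀ k ω, X k ω ∈ Set.Icc (0 : ℝ) 1)
    (hXvalid : ∀ k, ∀ t ∈ Set.Icc (0 : ℝ) 1, P {ω | X k ω ≤ t} ≤ ENNReal.ofReal t)
    (w : ℝ) (hw0 : 0 < w) (hw1 : w ≤ 1) :
    P {ω | (∏ k ∈ Finset.univ.filter (fun k => X k ω ≤ τ), X k ω) < w} ≤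
      ENNReal.ofReal (∑ k ∈ Finset.Icc 1 L,
        (Nat.choose L k : ℝ) * (1 - τ) ^ (L - k) *
          ((if w ≤ τ ^ k then (1 : ℝ) else 0) * w *
              (∑ s ∈ Finset.range k,
                (k * Real.log τ - Real.log w) ^ s / (Nat.factorial s : ℝ)) +
            (if τ ^ k < w then (1 : ℝ) else 0) * τ ^ k)) :=
  truncated_product_valid_general L τ hτ0 hτ1 Ω P X hXmeas hXindep hXvalid w hw0 hw1
end

section
/- Let L ≥ 1, let I be a nonempty finite index set partitioned into nonempty blocks C_1, …, C_L, let t : I → ℝ satisfy t_i ≥ 0 for all i with s_k := Σ_{i ∈ C_k} t_i > 0 for every k, and set S = Σ_{i ∈ I} t_i. Let a_1, …, a_L ≥ 0 and a ≥ 0 satisfy Σ_{k=1}^{L} a_k ≥ a. Then Σ_{k=1}^{L} a_k/√(s_k) ≥ (Σ_{k=1}^{L} a_k)/√(max_k s_k) ≥ a/√S, and consequently, for every z ∈ ℝ, 1 − Φ(z − Σ_{k=1}^{L} a_k/√(s_k)) ≥ 1 − Φ(z − a/√S), where Φ is the cumulative distribution function of the standard normal distribution. -/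
open MeasureTheory ProbabilityTheory

/-- Appendix III of the paper: if the sum of the within-subtype attributable
effects `a k` exceeds the overall attributable effect `a`, then the power of the
sensitivity analysis using the case description information is at least the
power without it. Here `t i = π̄̄ᵢ(1 − π̄̄ᵢ)` is the variance contribution of
matched set `i`, `C k` are the subtype blocks partitioning the matched sets,
`s k` the within-block variances, `S` the total variance, and `Φ` the standard
normal cumulative distribution function. -/
theorem power_gain_from_case_description
    (L : ℕ) (hL : 1 ≤ L)
    (ι : Type*) [Fintype ι] [Nonempty ι] [DecidableEq ι]
    (C : Fin L → Finset ι)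
    (hCne : ∀ k, (C k).Nonempty)
    (hCdisj : ∀ k k', k ≠ k' → Disjoint (C k) (C k'))
    (hCcover : Finset.univ.biUnion C = Finset.univ)
    (t : ι → ℝ) (ht : ∀ i, 0 ≤ t i)
    (s : Fin L → ℝ) (hs : ∀ k, s k = ∑ i ∈ C k, t i) (hspos : ∀ k, 0 < s k)
    (S : ℝ) (hS : S = ∑ i, t i)
    (a : Fin L → ℝ) (ha : ∀ k, 0 ≤ a k)
    (A : ℝ) (hA : 0 ≤ A) (hsum : A ≤ ∑ k, a k)
    (Phi : ℝ → ℝ)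
    (hPhi : ∀ z, Phi z = (gaussianReal 0 1 (Set.Iic z)).toReal) :
    (∑ k, a k) / Real.sqrt (Finset.univ.sup' ⟨⟨0, hL⟩, Finset.mem_univ _⟩ s) ≤
        ∑ k, a k / Real.sqrt (s k) ∧
    A / Real.sqrt S ≤
        (∑ k, a k) / Real.sqrt (Finset.univ.sup' ⟨⟨0, hL⟩, Finset.mem_univ _⟩ s) ∧
    ∀ z : ℝ, 1 - Phi (z - A / Real.sqrt S) ≤
        1 - Phi (z - ∑ k, a k / Real.sqrt (s k)) := by

  classical
  set M := Finset.univ.sup' ⟨⟨0, hL⟩, Finset.mem_univ _⟩ s with hM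
  have hMpos : 0 < M := lt_of_lt_of_le (hspos ⟨0, hL⟩)
    (Finset.le_sup' s (Finset.mem_univ _))
  have hsleM : ∀ k, s k ≤ M := fun k => Finset.le_sup' s (Finset.mem_univ k)
  have hMleS : M ≤ S := by
    apply Finset.sup'_le
    intro k _
    rw [hs, hS]
    exact Finset.sum_le_sum_of_subset_of_nonneg (Finset.subset_univ _)
      (fun i _ _ => ht i)
  have hSpos : 0 < S := lt_of_lt_of_le hMpos hMleS
  have hsqrtM : 0 < Real.sqrt M := Real.sqrt_pos.mpr hMpos
  have hsqrtS : 0 < Real.sqrt S := Real.sqrt_pos.mpr hSpos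
  have h1 : (∑ k, a k) / Real.sqrt M ≤ ∑ k, a k / Real.sqrt (s k) := by
    rw [Finset.sum_div]
    apply Finset.sum_le_sum
    intro k _
    exact div_le_div_of_nonneg_left (ha k) (Real.sqrt_pos.mpr (hspos k))
      (Real.sqrt_le_sqrt (hsleM k)) |>.trans_eq rfl
  have h2 : A / Real.sqrt S ≤ (∑ k, a k) / Real.sqrt M := by
    apply div_le_div₀ (Finset.sum_nonneg fun k _ => ha k) hsum hsqrtM
    exact Real.sqrt_le_sqrt hMleS
  refine ⟨h1, h2, fun z => ?_⟩
  have hmono : Monotone Phi := by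
    intro x y hxy
    rw [hPhi, hPhi]
    have : IsProbabilityMeasure (gaussianReal (0:ℝ) 1) := inferInstance
    exact ENNReal.toReal_mono (measure_ne_top _ _)
      (measure_mono (Set.Iic_subset_Iic.mpr hxy))
  have := hmono (sub_le_sub_left (h2.trans h1) z)
  linarith
end

section
/- Let J ≥ 1 be an integer, Γ ≥ 1 a real number, and π : Fin J → ℝ with 0 < π_j < 1 for all j. Then the following are equivalent: (i) for all j, k, π_j(1 − π_k)/(π_k(1 − π_j)) ≤ Γ; (ii) there exist α ∈ ℝ and u : Fin J → ℝ with 0 ≤ u_j ≤ 1 for all j such that log(π_j/(1 − π_j)) = α + (log Γ)·u_j for every j. -/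
/-! In log-odds `λ_j = log (π_j / (1 - π_j))` the odds ratio of units `j` and `k` is
`exp (λ_j - λ_k)`, so the bound (i) says that all the `λ_j` lie in an interval of length
`log Γ`. Taking `α` to be the smallest `λ_j` and `u_j = (λ_j - α) / log Γ` gives (ii);
conversely (ii) puts every `λ_j` in `[α, α + log Γ]`. -/

theorem exists_forall_mem_Icc_of_forall_sub_le {ι : Type*} [Finite ι] {f : ι → ℝ} {c : ℝ}
    (h : ∀ j k, f j - f k ≤ c) : ∃ α, ∀ j, f j ∈ Set.Icc α (α + c) := by
  cases isEmpty_or_nonempty ι with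
  | inl _ => exact ⟨0, isEmptyElim⟩
  | inr _ =>
    obtain ⟨k, hk⟩ := Finite.exists_min f
    exact ⟨f k, fun j => ⟨hk j, by linarith [h j k]⟩⟩

theorem mem_Icc_iff_exists_eq_add_mul {x α c : ℝ} (hc : 0 ≤ c) :
    x ∈ Set.Icc α (α + c) ↔ ∃ t, (0 ≤ t ∧ t ≤ 1) ∧ x = α + c * t := by
  constructor
  · rintro ⟨hαx, hxc⟩
    rcases hc.eq_or_lt with rfl | hc
    · exact ⟨0, ⟨le_rfl, zero_le_one⟩, by linarith⟩
    refine ⟨(x - α) / c, ⟨by positivity, div_le_one_of_le₀ (by linarith) hc.le⟩, ?_⟩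
    rw [mul_div_cancel₀ _ hc.ne']
    ring
  · rintro ⟨t, ⟨ht0, ht1⟩, rfl⟩
    constructor <;> nlinarith

theorem forall_sub_le_iff_exists_eq_add_mul {ι : Type*} [Finite ι] {f : ι → ℝ} {c : ℝ}
    (hc : 0 ≤ c) :
    (∀ j k, f j - f k ≤ c) ↔
      ∃ (α : ℝ) (u : ι → ℝ), (∀ j, 0 ≤ u j ∧ u j ≤ 1) ∧ ∀ j, f j = α + c * u j := by
  constructor
  · intro h
    obtain ⟨α, hα⟩ := exists_forall_mem_Icc_of_forall_sub_le h
    choose u hu using fun j => (mem_Icc_iff_exists_eq_add_mul hc).1 (hα j)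
    exact ⟨α, u, fun j => (hu j).1, fun j => (hu j).2⟩
  · rintro ⟨α, u, hu, hf⟩ j k
    rw [hf j, hf k]
    nlinarith [hu j, hu k]

theorem odds_ratio_le_iff_log_odds_sub_le {p q Γ : ℝ} (hp : 0 < p ∧ p < 1) (hq : 0 < q ∧ q < 1)
    (hΓ : 0 < Γ) :
    p * (1 - q) / (q * (1 - p)) ≤ Γ ↔
      Real.log (p / (1 - p)) - Real.log (q / (1 - q)) ≤ Real.log Γ := by
  have hp' : 0 < p / (1 - p) := div_pos hp.1 (by linarith [hp.2])
  have hq' : 0 < q / (1 - q) := div_pos hq.1 (by linarith [hq.2])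
  have hratio : p * (1 - q) / (q * (1 - p)) = p / (1 - p) / (q / (1 - q)) := by
    field_simp [(by linarith [hp.2] : (1 - p) ≠ 0), (by linarith [hq.2] : (1 - q) ≠ 0)]
  rw [hratio, ← Real.log_div hp'.ne' hq'.ne', Real.log_le_log_iff (div_pos hp' hq') hΓ]

theorem rosenbaum_odds_model_equiv_general
    (J : ℕ) (Γ : ℝ) (hΓ : 1 ≤ Γ)
    (pr : Fin J → ℝ) (hpr : ∀ j, 0 < pr j ∧ pr j < 1) :
    (∀ j k, pr j * (1 - pr k) / (pr k * (1 - pr j)) ≤ Γ) ↔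
      ∃ (α : ℝ) (u : Fin J → ℝ), (∀ j, 0 ≤ u j ∧ u j ≤ 1) ∧
        ∀ j, Real.log (pr j / (1 - pr j)) = α + Real.log Γ * u j := by
  have hΓ0 : 0 < Γ := by linarith
  simp only [fun j k => odds_ratio_le_iff_log_odds_sub_le (hpr j) (hpr k) hΓ0]
  exact forall_sub_le_iff_exists_eq_add_mul (Real.log_nonneg hΓ)

/-- Rosenbaum (2002), Chapter 4, Proposition 12: within a matched set of `J`
units, the odds-ratio bound `π_j(1−π_k)/(π_k(1−π_j)) ≤ Γ` for all pairs is
equivalent to the existence of the logistic sensitivity model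
`log(π_j/(1−π_j)) = α + (log Γ)·u_j` with `u_j ∈ [0,1]`. -/
theorem rosenbaum_odds_model_equiv
    (J : ℕ) (hJ : 1 ≤ J) (Γ : ℝ) (hΓ : 1 ≤ Γ)
    (pr : Fin J → ℝ) (hpr : ∀ j, 0 < pr j ∧ pr j < 1) :
    (∀ j k, pr j * (1 - pr k) / (pr k * (1 - pr j)) ≤ Γ) ↔
      ∃ (α : ℝ) (u : Fin J → ℝ), (∀ j, 0 ≤ u j ∧ u j ≤ 1) ∧
        ∀ j, Real.log (pr j / (1 - pr j)) = α + Real.log Γ * u j :=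
  rosenbaum_odds_model_equiv_general J Γ hΓ pr hpr
end
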